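/- arXiv:1305.3767 — 5 statements merged into one kernel-verified Lean document; each statement's English description precedes it below -/
import Mathlib

section
/- Define Δ₁ := k₂² + 4k₃, Δ₂ := k₂ − 2k₁, Δ₃ := k₁² − k₁k₂ − k₃ as functions of real parameters (k₁, k₂, k₃). (i) Under the parameter change (k₁, k₂, k₃) ↦ (k₁ + u, k₂ + 2u, k₃ − k₂u − u²) for any u ∈ ℝ, each of Δ₁, Δ₂, Δ₃ is unchanged. (ii) Under the parameter change (k₁, k₂, k₃) ↦ (v²k₁, v²k₂, v⁴k₃) for any v ≠ 0, one has Δ₁ ↦ v⁴Δ₁, Δ₂ ↦ v²Δ₂, Δ₃ ↦ v⁴Δ₃. In particular, the signs of Δ₁, Δ₂, Δ₃ are invariant under both parameter changes. Moreover Δ₂² − 4Δ₃ = Δ₁. -/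
theorem stmt4 (k₁ k₂ k₃ u v : ℝ) (hv : v ≠ 0) :
    -- (i) invariance of Δ₁, Δ₂, Δ₃ under (k₁,k₂,k₃) ↦ (k₁+u, k₂+2u, k₃−k₂u−u²)
    ((k₂ + 2 * u) ^ 2 + 4 * (k₃ - k₂ * u - u ^ 2) = k₂ ^ 2 + 4 * k₃) ∧
    ((k₂ + 2 * u) - 2 * (k₁ + u) = k₂ - 2 * k₁) ∧
    ((k₁ + u) ^ 2 - (k₁ + u) * (k₂ + 2 * u) - (k₃ - k₂ * u - u ^ 2)
        = k₁ ^ 2 - k₁ * k₂ - k₃) ∧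
    -- (ii) behaviour of Δ₁, Δ₂, Δ₃ under (k₁,k₂,k₃) ↦ (v²k₁, v²k₂, v⁴k₃)
    ((v ^ 2 * k₂) ^ 2 + 4 * (v ^ 4 * k₃) = v ^ 4 * (k₂ ^ 2 + 4 * k₃)) ∧
    (v ^ 2 * k₂ - 2 * (v ^ 2 * k₁) = v ^ 2 * (k₂ - 2 * k₁)) ∧
    ((v ^ 2 * k₁) ^ 2 - (v ^ 2 * k₁) * (v ^ 2 * k₂) - v ^ 4 * k₃
        = v ^ 4 * (k₁ ^ 2 - k₁ * k₂ - k₃)) ∧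
    -- the signs of Δ₁, Δ₂, Δ₃ are invariant under both parameter changes
    (SignType.sign ((k₂ + 2 * u) ^ 2 + 4 * (k₃ - k₂ * u - u ^ 2))
        = SignType.sign (k₂ ^ 2 + 4 * k₃)) ∧
    (SignType.sign ((k₂ + 2 * u) - 2 * (k₁ + u)) = SignType.sign (k₂ - 2 * k₁)) ∧
    (SignType.sign ((k₁ + u) ^ 2 - (k₁ + u) * (k₂ + 2 * u) - (k₃ - k₂ * u - u ^ 2))
        = SignType.sign (k₁ ^ 2 - k₁ * k₂ - k₃)) ∧
    (SignType.sign ((v ^ 2 * k₂) ^ 2 + 4 * (v ^ 4 * k₃))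
        = SignType.sign (k₂ ^ 2 + 4 * k₃)) ∧
    (SignType.sign (v ^ 2 * k₂ - 2 * (v ^ 2 * k₁)) = SignType.sign (k₂ - 2 * k₁)) ∧
    (SignType.sign ((v ^ 2 * k₁) ^ 2 - (v ^ 2 * k₁) * (v ^ 2 * k₂) - v ^ 4 * k₃)
        = SignType.sign (k₁ ^ 2 - k₁ * k₂ - k₃)) ∧
    -- Δ₂² − 4Δ₃ = Δ₁
    ((k₂ - 2 * k₁) ^ 2 - 4 * (k₁ ^ 2 - k₁ * k₂ - k₃) = k₂ ^ 2 + 4 * k₃) := by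

  have h2 : (0:ℝ) < v ^ 2 := by positivity
  have h4 : (0:ℝ) < v ^ 4 := by positivity
  have s2 : ∀ x : ℝ, SignType.sign (v ^ 2 * x) = SignType.sign x := by
    intro x; rw [sign_mul, sign_pos h2, one_mul]
  have s4 : ∀ x : ℝ, SignType.sign (v ^ 4 * x) = SignType.sign x := by
    intro x; rw [sign_mul, sign_pos h4, one_mul]
  refine ⟨by ring, by ring, by ring, by ring, by ring, by ring, ?_, ?_, ?_, ?_, ?_, ?_, by ring⟩
  · congr 1; ring
  · congr 1; ring
  · congr 1; ring
  · rw [show (v ^ 2 * k₂) ^ 2 + 4 * (v ^ 4 * k₃) = v ^ 4 * (k₂ ^ 2 + 4 * k₃) by ring, s4]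
  · rw [show v ^ 2 * k₂ - 2 * (v ^ 2 * k₁) = v ^ 2 * (k₂ - 2 * k₁) by ring, s2]
  · rw [show (v ^ 2 * k₁) ^ 2 - (v ^ 2 * k₁) * (v ^ 2 * k₂) - v ^ 4 * k₃ = v ^ 4 * (k₁ ^ 2 - k₁ * k₂ - k₃) by ring, s4]
end

section
/- Let Δ₂, Δ₃ ∈ ℝ with Δ₃ ≠ 0 and Δ₁ := Δ₂² − 4Δ₃ > 0, and let ε ∈ ℝ. Define f(s) := (1 + Δ₂ s² + Δ₃ s⁴)^{1/4} · ((2 + (Δ₂ + √Δ₁)s²)/(2 + (Δ₂ − √Δ₁)s²))^{Δ₂/(4√Δ₁)}. Then on any open interval I containing 0 on which 1 + Δ₂ s² + Δ₃ s⁴ > 0, 2 + (Δ₂ + √Δ₁)s² > 0 and 2 + (Δ₂ − √Δ₁)s² > 0, the function u(s) := 1 + 2ε ∫₀ˢ f(σ) dσ satisfies equation (E₀), i.e. (1 + Δ₂ s² + Δ₃ s⁴) u''(s) = s(Δ₂ + Δ₃ s²) u'(s) for all s ∈ I, together with u(0) = 1 and u'(0) = 2ε. -/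
/-!
`f` satisfies the first-order linear equation `f' = s (Δ₂ + Δ₃ s²) / P · f`, with
`P = 1 + Δ₂ s² + Δ₃ s⁴`: adding the logarithmic derivatives of the two factors of `f` gives
`P' / (4P) + Δ₂/(4√Δ₁) · (A'/A − B'/B)`, where `A, B = 2 + (Δ₂ ± √Δ₁) s²`, and this equals
`s (Δ₂ + Δ₃ s²) / P` because `A B = 4P` and `A' B − A B' = 8 √Δ₁ s`.
Hence `u' = 2ε f` satisfies the same equation, which is `(E₀)`.
-/

open Set

/-- The integrand `f` in the case `Δ₃ ≠ 0`, `Δ₁ := Δ₂² − 4Δ₃ > 0`: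
`f(s) = (1 + Δ₂ s² + Δ₃ s⁴)^{1/4} · ((2 + (Δ₂ + √Δ₁)s²)/(2 + (Δ₂ − √Δ₁)s²))^{Δ₂/(4√Δ₁)}`. -/
noncomputable def f7 (Δ₂ Δ₃ : ℝ) (s : ℝ) : ℝ :=
  (1 + Δ₂ * s ^ 2 + Δ₃ * s ^ 4) ^ ((1 : ℝ) / 4) *
    ((2 + (Δ₂ + Real.sqrt (Δ₂ ^ 2 - 4 * Δ₃)) * s ^ 2) /
        (2 + (Δ₂ - Real.sqrt (Δ₂ ^ 2 - 4 * Δ₃)) * s ^ 2)) ^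
      (Δ₂ / (4 * Real.sqrt (Δ₂ ^ 2 - 4 * Δ₃)))

/-- `u(s) = 1 + 2ε ∫₀ˢ f(σ) dσ`. -/
noncomputable def u7 (Δ₂ Δ₃ ε : ℝ) (s : ℝ) : ℝ :=
  1 + 2 * ε * ∫ σ in (0:ℝ)..s, f7 Δ₂ Δ₃ σ

variable {E : Type*} [NormedAddCommGroup E] [NormedSpace ℝ E] [CompleteSpace E] in
theorem hasDerivAt_integral_of_continuousOn {f : ℝ → E} {U : Set ℝ} {x₀ s : ℝ} (hU : IsOpen U)
    (hU' : U.OrdConnected) (hf : ContinuousOn f U) (hx₀ : x₀ ∈ U) (hs : s ∈ U) :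
    HasDerivAt (fun x => ∫ σ in x₀..x, f σ) (f s) s :=
  intervalIntegral.integral_hasDerivAt_right
    ((hf.mono (hU'.uIcc_subset hx₀ hs)).intervalIntegrable)
    (hf.stronglyMeasurableAtFilter hU s hs) (hf.continuousAt (hU.mem_nhds hs))

theorem deriv_deriv_eq_mul_deriv {F f g : ℝ → ℝ} {U : Set ℝ} {s : ℝ} (hU : IsOpen U)
    (hF : ∀ x ∈ U, HasDerivAt F (f x) x) (hf : ∀ x ∈ U, HasDerivAt f (g x * f x) x)
    (hs : s ∈ U) : deriv (deriv F) s = g s * deriv F s := by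
  have hF' : deriv F =ᶠ[nhds s] f :=
    Filter.eventuallyEq_of_mem (hU.mem_nhds hs) fun x hx => (hF x hx).deriv
  rw [hF'.deriv_eq, (hf s hs).deriv, (hF s hs).deriv]

theorem HasDerivAt.rpow_const_of_pos {f : ℝ → ℝ} {f' x : ℝ} (hf : HasDerivAt f f' x)
    (hx : 0 < f x) (p : ℝ) :
    HasDerivAt (fun y => f y ^ p) (p * (f' / f x) * f x ^ p) x := by
  refine (hf.rpow_const (p := p) (Or.inl hx.ne')).congr_deriv ?_
  rw [Real.rpow_sub hx, Real.rpow_one]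
  field_simp

theorem hasDerivAt_quadratic_even (c d s : ℝ) :
    HasDerivAt (fun x => c + d * x ^ 2) (2 * d * s) s :=
  (((hasDerivAt_pow 2 s).const_mul d).const_add c).congr_deriv (by ring)

theorem hasDerivAt_quartic_even (c d e s : ℝ) :
    HasDerivAt (fun x => c + d * x ^ 2 + e * x ^ 4) (2 * d * s + 4 * e * s ^ 3) s :=
  ((hasDerivAt_quadratic_even c d s).add ((hasDerivAt_pow 4 s).const_mul e)).congr_deriv
    (by ring)

theorem hasDerivAt_f7 {Δ₂ Δ₃ s : ℝ} (hΔ₁ : 0 < Δ₂ ^ 2 - 4 * Δ₃)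
    (hP : 0 < 1 + Δ₂ * s ^ 2 + Δ₃ * s ^ 4)
    (hA : 0 < 2 + (Δ₂ + Real.sqrt (Δ₂ ^ 2 - 4 * Δ₃)) * s ^ 2)
    (hB : 0 < 2 + (Δ₂ - Real.sqrt (Δ₂ ^ 2 - 4 * Δ₃)) * s ^ 2) :
    HasDerivAt (f7 Δ₂ Δ₃)
      (s * (Δ₂ + Δ₃ * s ^ 2) / (1 + Δ₂ * s ^ 2 + Δ₃ * s ^ 4) * f7 Δ₂ Δ₃ s) s := by
  set r := Real.sqrt (Δ₂ ^ 2 - 4 * Δ₃)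
  have hr : 0 < r := Real.sqrt_pos.mpr hΔ₁
  have hr2 : r ^ 2 = Δ₂ ^ 2 - 4 * Δ₃ := Real.sq_sqrt hΔ₁.le
  have hΔ₃ : Δ₃ = (Δ₂ ^ 2 - r ^ 2) / 4 := by linarith
  have hlog : 1 / 4 * ((2 * Δ₂ * s + 4 * Δ₃ * s ^ 3) / (1 + Δ₂ * s ^ 2 + Δ₃ * s ^ 4)) +
      Δ₂ / (4 * r) * ((2 * (Δ₂ + r) * s * (2 + (Δ₂ - r) * s ^ 2) -
          (2 + (Δ₂ + r) * s ^ 2) * (2 * (Δ₂ - r) * s)) / (2 + (Δ₂ - r) * s ^ 2) ^ 2 /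
        ((2 + (Δ₂ + r) * s ^ 2) / (2 + (Δ₂ - r) * s ^ 2))) =
      s * (Δ₂ + Δ₃ * s ^ 2) / (1 + Δ₂ * s ^ 2 + Δ₃ * s ^ 4) := by
    rw [hΔ₃] at hP ⊢
    field_simp
    ring
  have hQ := (hasDerivAt_quadratic_even 2 (Δ₂ + r) s).div
    (hasDerivAt_quadratic_even 2 (Δ₂ - r) s) hB.ne'
  have hf := ((hasDerivAt_quartic_even 1 Δ₂ Δ₃ s).rpow_const_of_pos hP (1 / 4)).mul
    (hQ.rpow_const_of_pos (div_pos hA hB) (Δ₂ / (4 * r)))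
  refine hf.congr_deriv ?_
  rw [← hlog]
  simp only [f7, Pi.div_apply]
  ring

theorem stmt7_general (Δ₂ Δ₃ ε : ℝ) (hΔ₁ : 0 < Δ₂ ^ 2 - 4 * Δ₃)
    (a b : ℝ) (ha : a < 0) (hb : 0 < b)
    (hpos : ∀ s ∈ Set.Ioo a b,
      0 < 1 + Δ₂ * s ^ 2 + Δ₃ * s ^ 4 ∧
      0 < 2 + (Δ₂ + Real.sqrt (Δ₂ ^ 2 - 4 * Δ₃)) * s ^ 2 ∧
      0 < 2 + (Δ₂ - Real.sqrt (Δ₂ ^ 2 - 4 * Δ₃)) * s ^ 2) :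
    (∀ s ∈ Set.Ioo a b,
      (1 + Δ₂ * s ^ 2 + Δ₃ * s ^ 4) * deriv (deriv (u7 Δ₂ Δ₃ ε)) s
        = s * (Δ₂ + Δ₃ * s ^ 2) * deriv (u7 Δ₂ Δ₃ ε) s) ∧
    u7 Δ₂ Δ₃ ε 0 = 1 ∧
    deriv (u7 Δ₂ Δ₃ ε) 0 = 2 * ε := by
  have h0 : (0 : ℝ) ∈ Ioo a b := ⟨ha, hb⟩
  have hf : ∀ s ∈ Ioo a b, HasDerivAt (f7 Δ₂ Δ₃)
      (s * (Δ₂ + Δ₃ * s ^ 2) / (1 + Δ₂ * s ^ 2 + Δ₃ * s ^ 4) * f7 Δ₂ Δ₃ s) s :=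
    fun s hs => hasDerivAt_f7 hΔ₁ (hpos s hs).1 (hpos s hs).2.1 (hpos s hs).2.2
  have hu : ∀ s ∈ Ioo a b, HasDerivAt (u7 Δ₂ Δ₃ ε) (2 * ε * f7 Δ₂ Δ₃ s) s := fun s hs =>
    ((hasDerivAt_integral_of_continuousOn isOpen_Ioo ordConnected_Ioo
      (fun x hx => (hf x hx).continuousAt.continuousWithinAt) h0 hs).const_mul (2 * ε)).const_add 1
  refine ⟨fun s hs => ?_, by simp [u7], ?_⟩
  · have hu' : ∀ x ∈ Ioo a b, HasDerivAt (fun x => 2 * ε * f7 Δ₂ Δ₃ x)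
        (x * (Δ₂ + Δ₃ * x ^ 2) / (1 + Δ₂ * x ^ 2 + Δ₃ * x ^ 4) * (2 * ε * f7 Δ₂ Δ₃ x)) x :=
      fun x hx => ((hf x hx).const_mul (2 * ε)).congr_deriv (by ring)
    rw [deriv_deriv_eq_mul_deriv isOpen_Ioo hu hu' hs, div_mul_eq_mul_div, mul_div_cancel₀ _ (hpos s hs).1.ne']
  · simp [(hu 0 h0).deriv, f7]

theorem stmt7 (Δ₂ Δ₃ ε : ℝ) (hΔ₃ : Δ₃ ≠ 0) (hΔ₁ : 0 < Δ₂ ^ 2 - 4 * Δ₃)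
    (a b : ℝ) (ha : a < 0) (hb : 0 < b)
    (hpos : ∀ s ∈ Set.Ioo a b,
      0 < 1 + Δ₂ * s ^ 2 + Δ₃ * s ^ 4 ∧
      0 < 2 + (Δ₂ + Real.sqrt (Δ₂ ^ 2 - 4 * Δ₃)) * s ^ 2 ∧
      0 < 2 + (Δ₂ - Real.sqrt (Δ₂ ^ 2 - 4 * Δ₃)) * s ^ 2) :
    (∀ s ∈ Set.Ioo a b,
      (1 + Δ₂ * s ^ 2 + Δ₃ * s ^ 4) * deriv (deriv (u7 Δ₂ Δ₃ ε)) s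
        = s * (Δ₂ + Δ₃ * s ^ 2) * deriv (u7 Δ₂ Δ₃ ε) s) ∧
    u7 Δ₂ Δ₃ ε 0 = 1 ∧
    deriv (u7 Δ₂ Δ₃ ε) 0 = 2 * ε :=
  stmt7_general Δ₂ Δ₃ ε hΔ₁ a b ha hb hpos
end

section
/- Let k₁, k₂, k₃, ε ∈ ℝ and set Δ₂ := k₂ − 2k₁ and Δ₃ := k₁² − k₁k₂ − k₃. Let I ⊆ ℝ be an open interval containing 0 and u : I → ℝ a twice continuously differentiable function with u > 0 on I, satisfying (1 + Δ₂ s² + Δ₃ s⁴) u''(s) = s(Δ₂ + Δ₃ s²) u'(s) on I, with u(0) = 1 and u'(0) = 2ε. Let J be an open interval containing 0 such that for all s ∈ J one has 1 + k₁ s² > 0 and s/√(1 + k₁ s²) ∈ I. Then the function φ(s) := √( (1 + k₁ s²) · u(s/√(1 + k₁ s²)) ) satisfies equation (E) with parameters (k₁, k₂, k₃) on J, and φ(0) = 1, φ'(0) = ε. -/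
/-- Equation (E) with parameters `k₁ k₂ k₃` for a real function `φ` at the point `s`:
`s(k₂ − k₃ s²)(φφ' − s φ'² − s φφ'') − (φ'² + φφ'') + k₁ φ(φ − s φ') = 0`. -/
def eqE (k₁ k₂ k₃ : ℝ) (φ : ℝ → ℝ) (s : ℝ) : Prop :=
  s * (k₂ - k₃ * s ^ 2) *
      (φ s * deriv φ s - s * (deriv φ s) ^ 2 - s * φ s * deriv (deriv φ) s) -
    ((deriv φ s) ^ 2 + φ s * deriv (deriv φ) s) +
    k₁ * φ s * (φ s - s * deriv φ s) = 0

/-!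
Writing `φ = √w`, one has `φφ' = w'/2` and `φ'² + φφ'' = w''/2`, so (E) for `φ` is half of an
equation `eqELin` that is linear in `w, w', w''`. For `w t = (1 + k₁ t²) u (t / √(1 + k₁ t²))`
the chain rule expresses `w, w', w''` through `u, u', u''` at `x = t / √(1 + k₁ t²)`, and since
`x² = t² / (1 + k₁ t²)`, the linear equation for `w` is the ODE for `u` at `x` multiplied by
`(1 + k₁ t²)²`.
-/

open Filter Topology Set

def eqELin (k₁ k₂ k₃ s w w₁ w₂ : ℝ) : Prop :=
  s * (k₂ - k₃ * s ^ 2) * (w₁ - s * w₂) - w₂ + k₁ * (2 * w - s * w₁) = 0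

theorem eqE_sqrt_iff {k₁ k₂ k₃ s : ℝ} {w : ℝ → ℝ}
    (hw : ∀ᶠ t in 𝓝 s, DifferentiableAt ℝ w t ∧ 0 < w t)
    (hw' : DifferentiableAt ℝ (deriv w) s) :
    eqE k₁ k₂ k₃ (fun t => √(w t)) s ↔ eqELin k₁ k₂ k₃ s (w s) (deriv w s) (deriv (deriv w) s) := by
  obtain ⟨hws, hpos⟩ := hw.self_of_nhds
  have hroot : 0 < √(w s) := Real.sqrt_pos.2 hpos
  have hderiv : deriv (fun t => √(w t)) =ᶠ[𝓝 s] fun t => deriv w t / (2 * √(w t)) :=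
    hw.mono fun t ht => deriv_sqrt ht.1 ht.2.ne'
  have hderiv2 : deriv (deriv fun t => √(w t)) s
      = deriv (deriv w) s / (2 * √(w s)) - deriv w s ^ 2 / (4 * √(w s) ^ 3) := by
    rw [hderiv.deriv_eq]
    refine ((hw'.hasDerivAt.div ((hws.hasDerivAt.sqrt hpos.ne').const_mul 2)
      (by positivity)).deriv).trans ?_
    field_simp
    ring
  have halve : ∀ R w₁ w₂ : ℝ, R ≠ 0 →
      s * (k₂ - k₃ * s ^ 2) * (R * (w₁ / (2 * R)) - s * (w₁ / (2 * R)) ^ 2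
          - s * R * (w₂ / (2 * R) - w₁ ^ 2 / (4 * R ^ 3)))
        - ((w₁ / (2 * R)) ^ 2 + R * (w₂ / (2 * R) - w₁ ^ 2 / (4 * R ^ 3)))
        + k₁ * R * (R - s * (w₁ / (2 * R)))
      = (s * (k₂ - k₃ * s ^ 2) * (w₁ - s * w₂) - w₂ + k₁ * (2 * R ^ 2 - s * w₁)) / 2 := by
    intro R w₁ w₂ hR
    field_simp
    ring
  rw [eqE, eqELin, deriv_sqrt hws hpos.ne', hderiv2, halve _ _ _ hroot.ne', Real.sq_sqrt hpos.le,
    div_eq_zero_iff]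
  simp

lemma hasDerivAt_one_add_mul_sq (k t : ℝ) :
    HasDerivAt (fun x => 1 + k * x ^ 2) (2 * k * t) t :=
  (((hasDerivAt_pow 2 t).const_mul k).const_add 1).congr_deriv (by norm_num; ring)

section
variable {k t : ℝ}

lemma hasDerivAt_sqrt_one_add_mul_sq (ht : 0 < 1 + k * t ^ 2) :
    HasDerivAt (fun x => √(1 + k * x ^ 2)) (k * t / √(1 + k * t ^ 2)) t :=
  ((hasDerivAt_one_add_mul_sq k t).sqrt ht.ne').congr_deriv (by field_simp)

lemma hasDerivAt_div_sqrt_one_add_mul_sq (ht : 0 < 1 + k * t ^ 2) :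
    HasDerivAt (fun x => x / √(1 + k * x ^ 2)) (1 / ((1 + k * t ^ 2) * √(1 + k * t ^ 2))) t := by
  have hq : 0 < √(1 + k * t ^ 2) := Real.sqrt_pos.2 ht
  refine ((hasDerivAt_id t).div (hasDerivAt_sqrt_one_add_mul_sq ht) hq.ne').congr_deriv ?_
  field_simp
  rw [id, Real.sq_sqrt ht.le]
  ring

lemma hasDerivAt_mul_comp_div_sqrt {u : ℝ → ℝ} {u' : ℝ} (ht : 0 < 1 + k * t ^ 2)
    (hu : HasDerivAt u u' (t / √(1 + k * t ^ 2))) :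
    HasDerivAt (fun x => (1 + k * x ^ 2) * u (x / √(1 + k * x ^ 2)))
      (2 * k * t * u (t / √(1 + k * t ^ 2)) + u' / √(1 + k * t ^ 2)) t := by
  have hq : 0 < √(1 + k * t ^ 2) := Real.sqrt_pos.2 ht
  refine ((hasDerivAt_one_add_mul_sq k t).mul
    (hu.comp t (hasDerivAt_div_sqrt_one_add_mul_sq ht))).congr_deriv ?_
  rw [Function.comp_apply]
  field_simp

lemma hasDerivAt_deriv_mul_comp_div_sqrt {u v : ℝ → ℝ} {v' : ℝ} (ht : 0 < 1 + k * t ^ 2)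
    (hu : HasDerivAt u (v (t / √(1 + k * t ^ 2))) (t / √(1 + k * t ^ 2)))
    (hv : HasDerivAt v v' (t / √(1 + k * t ^ 2))) :
    HasDerivAt (fun x => 2 * k * x * u (x / √(1 + k * x ^ 2))
        + v (x / √(1 + k * x ^ 2)) / √(1 + k * x ^ 2))
      (2 * k * u (t / √(1 + k * t ^ 2))
        + k * t * v (t / √(1 + k * t ^ 2)) / ((1 + k * t ^ 2) * √(1 + k * t ^ 2))
        + v' / (1 + k * t ^ 2) ^ 2) t := by
  have hq : 0 < √(1 + k * t ^ 2) := Real.sqrt_pos.2 ht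
  have hσ := hasDerivAt_div_sqrt_one_add_mul_sq ht
  refine ((((hasDerivAt_id t).const_mul (2 * k)).mul (hu.comp t hσ)).add
    ((hv.comp t hσ).div (hasDerivAt_sqrt_one_add_mul_sq ht) hq.ne')).congr_deriv ?_
  simp only [Function.comp_apply, id]
  field_simp
  rw [Real.sq_sqrt ht.le]
  ring

end

theorem eqELin_of_ode {k₁ k₂ k₃ s q v v₁ v₂ : ℝ} (hq : 0 < q) (hq2 : q ^ 2 = 1 + k₁ * s ^ 2)
    (hODE : (1 + (k₂ - 2 * k₁) * (s / q) ^ 2 + (k₁ ^ 2 - k₁ * k₂ - k₃) * (s / q) ^ 4) * v₂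
        = s / q * ((k₂ - 2 * k₁) + (k₁ ^ 2 - k₁ * k₂ - k₃) * (s / q) ^ 2) * v₁) :
    eqELin k₁ k₂ k₃ s ((1 + k₁ * s ^ 2) * v) (2 * k₁ * s * v + v₁ / q)
      (2 * k₁ * v + k₁ * s * v₁ / ((1 + k₁ * s ^ 2) * q) + v₂ / (1 + k₁ * s ^ 2) ^ 2) := by
  obtain ⟨V, rfl⟩ : ∃ V, v₁ = V * q := ⟨v₁ / q, by field_simp⟩
  rw [show (s / q) ^ 4 = ((s / q) ^ 2) ^ 2 by ring, div_pow, hq2] at hODE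
  have hp : 0 < 1 + k₁ * s ^ 2 := hq2 ▸ by positivity
  rw [eqELin]
  field_simp at hODE ⊢
  linear_combination -hODE

theorem eqE_sqrt_mul_comp_div_sqrt {k₁ k₂ k₃ s x : ℝ} {u : ℝ → ℝ}
    (hp : 0 < 1 + k₁ * s ^ 2) (hx : x = s / √(1 + k₁ * s ^ 2))
    (hu : ∀ᶠ y in 𝓝 x, DifferentiableAt ℝ u y ∧ 0 < u y)
    (hu' : DifferentiableAt ℝ (deriv u) x)
    (hODE : (1 + (k₂ - 2 * k₁) * x ^ 2 + (k₁ ^ 2 - k₁ * k₂ - k₃) * x ^ 4) * deriv (deriv u) x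
        = x * ((k₂ - 2 * k₁) + (k₁ ^ 2 - k₁ * k₂ - k₃) * x ^ 2) * deriv u x) :
    eqE k₁ k₂ k₃ (fun t => √((1 + k₁ * t ^ 2) * u (t / √(1 + k₁ * t ^ 2)))) s := by
  subst hx
  have hσ : Tendsto (fun t => t / √(1 + k₁ * t ^ 2)) (𝓝 s) (𝓝 (s / √(1 + k₁ * s ^ 2))) :=
    (hasDerivAt_div_sqrt_one_add_mul_sq hp).continuousAt.tendsto
  have hpos : ∀ᶠ t in 𝓝 s, 0 < 1 + k₁ * t ^ 2 :=
    (hasDerivAt_one_add_mul_sq k₁ s).continuousAt.eventually (lt_mem_nhds hp)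
  have hw : ∀ᶠ t in 𝓝 s,
      HasDerivAt (fun x => (1 + k₁ * x ^ 2) * u (x / √(1 + k₁ * x ^ 2)))
        (2 * k₁ * t * u (t / √(1 + k₁ * t ^ 2)) + deriv u (t / √(1 + k₁ * t ^ 2))
          / √(1 + k₁ * t ^ 2)) t ∧ 0 < (1 + k₁ * t ^ 2) * u (t / √(1 + k₁ * t ^ 2)) :=
    (hpos.and (hσ.eventually hu)).mono fun t ⟨hpt, hut, hupos⟩ =>
      ⟨hasDerivAt_mul_comp_div_sqrt hpt hut.hasDerivAt, mul_pos hpt hupos⟩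
  have hdw : _ =ᶠ[𝓝 s] _ := hw.mono fun t ht => ht.1.deriv
  have hw1 := hasDerivAt_deriv_mul_comp_div_sqrt hp hu.self_of_nhds.1.hasDerivAt hu'.hasDerivAt
  rw [eqE_sqrt_iff (hw.mono fun t ht => ⟨ht.1.differentiableAt, ht.2⟩)
    (hw1.differentiableAt.congr_of_eventuallyEq hdw), hdw.deriv_eq, hdw.self_of_nhds, hw1.deriv]
  exact eqELin_of_ode (Real.sqrt_pos.2 hp) (Real.sq_sqrt hp.le) hODE

theorem stmt10_general (k₁ k₂ k₃ ε : ℝ) (a b : ℝ) (ha : a < 0) (hb : 0 < b)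
    (u : ℝ → ℝ)
    (hupos : ∀ s ∈ Set.Ioo a b, 0 < u s)
    (huC2 : ContDiffOn ℝ 2 u (Set.Ioo a b))
    (huE : ∀ s ∈ Set.Ioo a b,
      (1 + (k₂ - 2 * k₁) * s ^ 2 + (k₁ ^ 2 - k₁ * k₂ - k₃) * s ^ 4) * deriv (deriv u) s
        = s * ((k₂ - 2 * k₁) + (k₁ ^ 2 - k₁ * k₂ - k₃) * s ^ 2) * deriv u s)
    (hu0 : u 0 = 1) (hu0' : deriv u 0 = 2 * ε)
    (c d : ℝ)
    (hJ : ∀ s ∈ Set.Ioo c d, 0 < 1 + k₁ * s ^ 2 ∧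
      s / Real.sqrt (1 + k₁ * s ^ 2) ∈ Set.Ioo a b) :
    (∀ s ∈ Set.Ioo c d,
      eqE k₁ k₂ k₃
        (fun t => Real.sqrt ((1 + k₁ * t ^ 2) * u (t / Real.sqrt (1 + k₁ * t ^ 2)))) s) ∧
    (fun t => Real.sqrt ((1 + k₁ * t ^ 2) * u (t / Real.sqrt (1 + k₁ * t ^ 2)))) 0 = 1 ∧
    deriv (fun t => Real.sqrt ((1 + k₁ * t ^ 2) * u (t / Real.sqrt (1 + k₁ * t ^ 2)))) 0
      = ε := by
  have hu : ∀ x ∈ Ioo a b, DifferentiableAt ℝ u x := fun x hx =>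
    (huC2.differentiableOn (by norm_num)).differentiableAt (isOpen_Ioo.mem_nhds hx)
  have hu' : ∀ x ∈ Ioo a b, DifferentiableAt ℝ (deriv u) x := fun x hx =>
    ((huC2.deriv_of_isOpen (m := 1) isOpen_Ioo (by norm_num)).differentiableOn one_ne_zero)
      |>.differentiableAt (isOpen_Ioo.mem_nhds hx)
  refine ⟨fun s hs => ?_, by simp [hu0], ?_⟩
  · obtain ⟨hp, hσ⟩ := hJ s hs
    refine eqE_sqrt_mul_comp_div_sqrt hp rfl ?_ (hu' _ hσ) (huE _ hσ)
    filter_upwards [isOpen_Ioo.mem_nhds hσ] with y hy using ⟨hu y hy, hupos y hy⟩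
  · have hw := hasDerivAt_mul_comp_div_sqrt (k := k₁) (t := 0) (u := u) (by simp)
      (by rw [zero_div]; exact (hu 0 ⟨ha, hb⟩).hasDerivAt)
    rw [(hw.sqrt (by simp [hu0])).deriv]
    simp [hu0, hu0']

theorem stmt10 (k₁ k₂ k₃ ε : ℝ) (a b : ℝ) (ha : a < 0) (hb : 0 < b)
    (u : ℝ → ℝ)
    (hupos : ∀ s ∈ Set.Ioo a b, 0 < u s)
    (huC2 : ContDiffOn ℝ 2 u (Set.Ioo a b))
    (huE : ∀ s ∈ Set.Ioo a b,
      (1 + (k₂ - 2 * k₁) * s ^ 2 + (k₁ ^ 2 - k₁ * k₂ - k₃) * s ^ 4) * deriv (deriv u) s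
        = s * ((k₂ - 2 * k₁) + (k₁ ^ 2 - k₁ * k₂ - k₃) * s ^ 2) * deriv u s)
    (hu0 : u 0 = 1) (hu0' : deriv u 0 = 2 * ε)
    (c d : ℝ) (hc : c < 0) (hd : 0 < d)
    (hJ : ∀ s ∈ Set.Ioo c d, 0 < 1 + k₁ * s ^ 2 ∧
      s / Real.sqrt (1 + k₁ * s ^ 2) ∈ Set.Ioo a b) :
    (∀ s ∈ Set.Ioo c d,
      eqE k₁ k₂ k₃
        (fun t => Real.sqrt ((1 + k₁ * t ^ 2) * u (t / Real.sqrt (1 + k₁ * t ^ 2)))) s) ∧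
    (fun t => Real.sqrt ((1 + k₁ * t ^ 2) * u (t / Real.sqrt (1 + k₁ * t ^ 2)))) 0 = 1 ∧
    deriv (fun t => Real.sqrt ((1 + k₁ * t ^ 2) * u (t / Real.sqrt (1 + k₁ * t ^ 2)))) 0
      = ε :=
  stmt10_general k₁ k₂ k₃ ε a b ha hb u hupos huC2 huE hu0 hu0' c d hJ
end

section
/- Let ε, κ ∈ ℝ. On any open interval I containing 0 on which 1 + 2εs + κs² > 0, the function φ(s) := √(1 + 2εs + κs²) satisfies equation (E) with parameters (k₁, k₂, k₃) = (κ, −κ, 0), i.e. −κ s (φφ' − s φ'² − s φφ'') − (φ'² + φφ'') + κ φ(φ − s φ') = 0 on I; moreover φ(0) = 1 and φ'(0) = ε. -/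
/-!
With `Q(s) = 1 + 2εs + κs²` and `φ = √Q`, equation (E) for `(κ, −κ, 0)` involves `φ` only through
`φ² = Q`, `φφ' = Q'/2 = ε + κs` and `φ'² + φφ'' = Q''/2 = κ`; substituting these makes it an
identity in `s`.
-/

open Filter Topology

lemma eqE_of_sq_eq_quadratic {ε κ s : ℝ} {φ : ℝ → ℝ} (hsq : φ s ^ 2 = 1 + 2 * ε * s + κ * s ^ 2)
    (hd : φ s * deriv φ s = ε + κ * s) (hdd : deriv φ s ^ 2 + φ s * deriv (deriv φ) s = κ) :
    eqE κ (-κ) 0 φ s := by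
  unfold eqE
  linear_combination (-2 * κ * s) * hd + (κ * s ^ 2 - 1) * hdd + κ * hsq

section SqrtQuadratic

variable {ε κ s : ℝ}

lemma hasDerivAt_sqrt_quadratic (h : 0 < 1 + 2 * ε * s + κ * s ^ 2) :
    HasDerivAt (fun t => √(1 + 2 * ε * t + κ * t ^ 2))
      ((ε + κ * s) / √(1 + 2 * ε * s + κ * s ^ 2)) s := by
  have hQ : HasDerivAt (fun t => 1 + 2 * ε * t + κ * t ^ 2) (2 * ε + 2 * κ * s) s :=
    ((((hasDerivAt_id' s).const_mul (2 * ε)).const_add 1).fun_add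
      ((hasDerivAt_pow 2 s).const_mul κ)).congr_deriv (by norm_num; ring)
  convert hQ.sqrt h.ne' using 1
  field_simp

lemma deriv_sqrt_quadratic_eventuallyEq (h : 0 < 1 + 2 * ε * s + κ * s ^ 2) :
    deriv (fun t => √(1 + 2 * ε * t + κ * t ^ 2)) =ᶠ[𝓝 s]
      fun t => (ε + κ * t) / √(1 + 2 * ε * t + κ * t ^ 2) := by
  have hcont : ContinuousAt (fun t => 1 + 2 * ε * t + κ * t ^ 2) s := by fun_prop
  have hQ : ∀ᶠ t in 𝓝 s, 0 < 1 + 2 * ε * t + κ * t ^ 2 :=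
    continuousAt_const.eventually_lt hcont h
  filter_upwards [hQ] with t ht using (hasDerivAt_sqrt_quadratic ht).deriv

lemma hasDerivAt_deriv_sqrt_quadratic (h : 0 < 1 + 2 * ε * s + κ * s ^ 2) :
    HasDerivAt (deriv fun t => √(1 + 2 * ε * t + κ * t ^ 2))
      ((κ - ((ε + κ * s) / √(1 + 2 * ε * s + κ * s ^ 2)) ^ 2) / √(1 + 2 * ε * s + κ * s ^ 2))
      s := by
  have hquot := (((hasDerivAt_id' s).const_mul κ).const_add ε).div
    (hasDerivAt_sqrt_quadratic h) (Real.sqrt_pos.2 h).ne'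
  refine (hquot.congr_of_eventuallyEq (deriv_sqrt_quadratic_eventuallyEq h)).congr_deriv ?_
  field_simp

lemma eqE_sqrt_quadratic (h : 0 < 1 + 2 * ε * s + κ * s ^ 2) :
    eqE κ (-κ) 0 (fun t => √(1 + 2 * ε * t + κ * t ^ 2)) s := by
  have hq : √(1 + 2 * ε * s + κ * s ^ 2) ≠ 0 := (Real.sqrt_pos.2 h).ne'
  apply eqE_of_sq_eq_quadratic (Real.sq_sqrt h.le)
  · rw [(hasDerivAt_sqrt_quadratic h).deriv, mul_div_cancel₀ _ hq]
  · rw [(hasDerivAt_sqrt_quadratic h).deriv, (hasDerivAt_deriv_sqrt_quadratic h).deriv,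
      mul_div_cancel₀ _ hq, add_sub_cancel]

end SqrtQuadratic

theorem stmt12_general (ε κ : ℝ) (a b : ℝ)
    (hpos : ∀ s ∈ Set.Ioo a b, 0 < 1 + 2 * ε * s + κ * s ^ 2) :
    (∀ s ∈ Set.Ioo a b,
      eqE κ (-κ) 0 (fun t => Real.sqrt (1 + 2 * ε * t + κ * t ^ 2)) s) ∧
    (fun t => Real.sqrt (1 + 2 * ε * t + κ * t ^ 2)) 0 = 1 ∧
    deriv (fun t => Real.sqrt (1 + 2 * ε * t + κ * t ^ 2)) 0 = ε := by
  have hQ0 : (0 : ℝ) < 1 + 2 * ε * 0 + κ * 0 ^ 2 := by norm_num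
  refine ⟨fun s hs => eqE_sqrt_quadratic (hpos s hs), by simp, ?_⟩
  simpa using (hasDerivAt_sqrt_quadratic hQ0).deriv

theorem stmt12 (ε κ : ℝ) (a b : ℝ) (ha : a < 0) (hb : 0 < b)
    (hpos : ∀ s ∈ Set.Ioo a b, 0 < 1 + 2 * ε * s + κ * s ^ 2) :
    (∀ s ∈ Set.Ioo a b,
      eqE κ (-κ) 0 (fun t => Real.sqrt (1 + 2 * ε * t + κ * t ^ 2)) s) ∧
    (fun t => Real.sqrt (1 + 2 * ε * t + κ * t ^ 2)) 0 = 1 ∧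
    deriv (fun t => Real.sqrt (1 + 2 * ε * t + κ * t ^ 2)) 0 = ε :=
  stmt12_general ε κ a b hpos
end

section
/- Let ε ∈ ℝ, k₁ ≠ 0, n ≥ 1 a natural number, and set k₂ := k₁/(2n). Define, for s in an open interval I containing 0 on which 1 + k₁ s² > 0, 1 + k₂ s² > 0 and the radicand below is positive: φ(s) := √( 1 + k₁ s² + ε s √(1 + k₂ s²) · [ (2n)!!/(2n−1)!! − Σ_{k=1}^{n−1} ( 2(n−k)·(2n−2)!!·(2k−3)!! / ((2n−1)!!·(2k)!!) ) · (1 + k₂ s²)^{−k} ] ), where the sum is empty when n = 1 and m!! := 1 for m ≤ 0. Then φ satisfies equation (E) with parameters (k₁, k₁/(2n), 0) on I, and φ(0) = 1, φ'(0) = ε. -/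
/-- The radicand of the solution `φ` in the case `k₂ = k₁/(2n)`, `k₃ = 0`:
`1 + k₁ s² + ε s √(1 + k₂ s²) · [ (2n)‼/(2n−1)‼ −
  Σ_{k=1}^{n−1} 2(n−k)(2n−2)‼(2k−3)‼ / ((2n−1)‼(2k)‼) · (1 + k₂ s²)^{−k} ]`.
Note that for `k = 1` the term `(2k−3)‼` is `(2·1 − 3)‼ = 0‼ = 1` by natural
subtraction, which implements the convention `m‼ = 1` for `m ≤ 0`. -/
noncomputable def rad15 (k₁ k₂ ε : ℝ) (n : ℕ) (s : ℝ) : ℝ :=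
  1 + k₁ * s ^ 2 + ε * s * Real.sqrt (1 + k₂ * s ^ 2) *
    ((Nat.doubleFactorial (2 * n) : ℝ) / (Nat.doubleFactorial (2 * n - 1) : ℝ) -
      ∑ k ∈ Finset.Icc 1 (n - 1),
        ((2 * (n - k) * Nat.doubleFactorial (2 * n - 2) *
            Nat.doubleFactorial (2 * k - 3) : ℕ) : ℝ) /
          ((Nat.doubleFactorial (2 * n - 1) * Nat.doubleFactorial (2 * k) : ℕ) : ℝ) *
          (1 + k₂ * s ^ 2) ^ (-(k : ℤ)))

/-!
With `ψ = φ²`, equation (E) for `φ = √ψ` becomes the linear equation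
`(1 + (k₂ - k₃ s²) s²) ψ'' = (k₂ - k₃ s² - k₁) s ψ' + 2 k₁ ψ`. For `k₃ = 0` it is solved by
`1 + k₁ s²`, and the rest of the radicand is `Σ_{k<n} a_k s (1 + k₂ s²)^(1/2 - k)`. The residual of
each term is a combination of the consecutive powers `(1 + k₂ s²)^(1/2 - k)` and
`(1 + k₂ s²)^(1/2 - k - 1)`; when `k₁ = 2 n k₂` the coefficients `a_k` obey a two-term recurrence
that makes these residuals telescope to zero. The value `φ'(0) = ε` is the identity `Σ a_k = 2`,
which follows by summation by parts from `(2k-1)‼/(2k)‼ - (2k+1)‼/(2k+2)‼ = (2k-1)‼/(2k+2)‼`.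
-/

open Filter Topology Finset
open scoped Nat

lemma eqE_sqrt_of_linear_ode {k₁ k₂ k₃ s ψ'' : ℝ} {ψ ψ' : ℝ → ℝ}
    (hψ : ∀ᶠ t in 𝓝 s, HasDerivAt ψ (ψ' t) t) (hψ' : HasDerivAt ψ' ψ'' s) (hpos : 0 < ψ s)
    (hode : (1 + (k₂ - k₃ * s ^ 2) * s ^ 2) * ψ'' =
      (k₂ - k₃ * s ^ 2 - k₁) * s * ψ' s + 2 * k₁ * ψ s) :
    eqE k₁ k₂ k₃ (fun t => √(ψ t)) s := by
  have hpos_near : ∀ᶠ t in 𝓝 s, 0 < ψ t :=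
    continuousAt_const.eventually_lt hψ.self_of_nhds.continuousAt hpos
  have hderiv : deriv (fun t => √(ψ t)) =ᶠ[𝓝 s] fun t => ψ' t / (2 * √(ψ t)) :=
    (hψ.and hpos_near).mono fun t h => (h.1.sqrt h.2.ne').deriv
  have hr : 0 < √(ψ s) := Real.sqrt_pos.2 hpos
  have hderiv2 := hψ'.fun_div ((hψ.self_of_nhds.sqrt hpos.ne').const_mul 2) (by positivity)
  unfold eqE
  rw [hderiv.self_of_nhds, hderiv.deriv_eq, hderiv2.deriv]
  have hsq := Real.sq_sqrt hpos.le
  beta_reduce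
  field_simp
  rw [hsq]
  linear_combination (-2 * ψ s) * hode

noncomputable def radTerm (k₂ α t : ℝ) : ℝ := t * (1 + k₂ * t ^ 2) ^ α

noncomputable def radTermDeriv (k₂ α t : ℝ) : ℝ :=
  (1 + 2 * α) * (1 + k₂ * t ^ 2) ^ α - 2 * α * (1 + k₂ * t ^ 2) ^ (α - 1)

noncomputable def radTermDeriv2 (k₂ α t : ℝ) : ℝ :=
  2 * α * k₂ * t * ((1 + 2 * α) * (1 + k₂ * t ^ 2) ^ (α - 1) -
    2 * (α - 1) * (1 + k₂ * t ^ 2) ^ (α - 2))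

section RadTerm

variable {k₂ s : ℝ}

lemma hasDerivAt_one_add_mul_sq_rpow (hu : 0 < 1 + k₂ * s ^ 2) (α : ℝ) :
    HasDerivAt (fun t => (1 + k₂ * t ^ 2) ^ α)
      (2 * α * k₂ * s * (1 + k₂ * s ^ 2) ^ (α - 1)) s := by
  have hquad : HasDerivAt (fun t => 1 + k₂ * t ^ 2) (2 * k₂ * s) s := by
    simpa [mul_comm, mul_left_comm] using ((hasDerivAt_pow 2 s).const_mul k₂).const_add 1
  convert hquad.rpow_const (p := α) (Or.inl hu.ne') using 1
  ring

lemma hasDerivAt_radTerm (hu : 0 < 1 + k₂ * s ^ 2) (α : ℝ) :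
    HasDerivAt (radTerm k₂ α) (radTermDeriv k₂ α s) s := by
  refine ((hasDerivAt_id' s).fun_mul (hasDerivAt_one_add_mul_sq_rpow hu α)).congr_deriv ?_
  rw [radTermDeriv, Real.rpow_sub_one hu.ne']
  field_simp
  ring

lemma hasDerivAt_radTermDeriv (hu : 0 < 1 + k₂ * s ^ 2) (α : ℝ) :
    HasDerivAt (radTermDeriv k₂ α) (radTermDeriv2 k₂ α s) s := by
  refine (((hasDerivAt_one_add_mul_sq_rpow hu α).const_mul (1 + 2 * α)).fun_sub
    ((hasDerivAt_one_add_mul_sq_rpow hu (α - 1)).const_mul (2 * α))).congr_deriv ?_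
  rw [radTermDeriv2, show α - 1 - 1 = α - 2 by ring]
  ring

lemma radTerm_ode_residual (hu : 0 < 1 + k₂ * s ^ 2) (k₁ α : ℝ) :
    (1 + k₂ * s ^ 2) * radTermDeriv2 k₂ α s - (k₂ - k₁) * s * radTermDeriv k₂ α s -
        2 * k₁ * radTerm k₂ α s =
      s * (((2 * α + 1) * (2 * α * k₂ - k₂ + k₁) - 2 * k₁) * (1 + k₂ * s ^ 2) ^ α +
        2 * α * ((3 - 2 * α) * k₂ - k₁) * (1 + k₂ * s ^ 2) ^ (α - 1)) := by
  have h1 := Real.rpow_sub_one hu.ne' α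
  have h2 := Real.rpow_sub_one hu.ne' (α - 1)
  rw [show α - 1 - 1 = α - 2 by ring] at h2
  simp only [radTerm, radTermDeriv, radTermDeriv2, h1, h2]
  field_simp
  ring

end RadTerm

lemma sum_range_mul_eq_zero_of_recurrence {n : ℕ} {a : ℕ → ℝ}
    (hrec : ∀ k < n, (2 * k - 1) * (k + 1 - n) * a k = 2 * (k + 1) * (k - n) * a (k + 1))
    (P : ℕ → ℝ) :
    ∑ k ∈ range n, a k * (2 * k * (k - n - 1) * P k - (2 * k - 1) * (k + 1 - n) * P (k + 1)) =
      0 := by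
  set F : ℕ → ℝ := fun k => 2 * k * (k - n - 1) * a k * P k
  have hstep : ∀ k ∈ range n,
      a k * (2 * k * (k - n - 1) * P k - (2 * k - 1) * (k + 1 - n) * P (k + 1)) =
        F k - F (k + 1) := by
    intro k hk
    simp only [F]
    push_cast
    linear_combination -P (k + 1) * hrec k (mem_range.1 hk)
  -- the recurrence at `k = n - 1` forces `n * a n = 0`
  have hFn : F n = 0 := by
    rcases n with _ | m
    · simp [F]
    · have hlast := hrec m m.lt_succ_self
      simp only [F]
      push_cast at hlast ⊢
      linear_combination -P (m + 1) * hlast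
  rw [sum_congr rfl hstep, sum_range_sub', hFn]
  simp [F]

noncomputable def dfRatio (k : ℕ) : ℝ := ((2 * k - 1)‼ : ℝ) / (2 * k)‼

lemma dfRatio_zero : dfRatio 0 = 1 := by simp [dfRatio]

lemma dfRatio_pos (k : ℕ) : 0 < dfRatio k := by
  unfold dfRatio
  have := Nat.doubleFactorial_pos (2 * k - 1)
  have := Nat.doubleFactorial_pos (2 * k)
  positivity

lemma dfRatio_succ (k : ℕ) : dfRatio (k + 1) = (2 * k + 1) / (2 * k + 2) * dfRatio k := by
  have := Nat.doubleFactorial_pos (2 * k)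
  rw [dfRatio, dfRatio, show 2 * (k + 1) - 1 = 2 * k + 1 by omega,
    show 2 * (k + 1) = 2 * k + 2 by ring, Nat.doubleFactorial_add_one,
    Nat.doubleFactorial_add_two]
  push_cast
  field_simp

lemma sum_range_dfRatio_div (m : ℕ) :
    ∑ j ∈ range m, dfRatio j / (j + 1) = 2 * (1 - dfRatio m) := by
  have hterm (j : ℕ) : dfRatio j / (j + 1) = 2 * (dfRatio j - dfRatio (j + 1)) := by
    rw [dfRatio_succ]
    field_simp
    ring
  simp only [hterm, ← mul_sum, sum_range_sub', dfRatio_zero]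

lemma sum_range_sub_mul_dfRatio_div (m : ℕ) :
    ∑ j ∈ range m, (m - j : ℝ) * dfRatio j / (j + 1) =
      2 * (m + 1) - 2 * (2 * m + 1) * dfRatio m := by
  induction m with
  | zero => simp [dfRatio_zero]
  | succ m ih =>
    have hsplit : ∑ j ∈ range (m + 1), ((m + 1 : ℕ) - j : ℝ) * dfRatio j / (j + 1) =
        ∑ j ∈ range (m + 1), (m - j : ℝ) * dfRatio j / (j + 1) +
          ∑ j ∈ range (m + 1), dfRatio j / (j + 1) := by
      rw [← sum_add_distrib]
      exact sum_congr rfl fun j _ => by push_cast; ring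
    rw [hsplit, sum_range_succ, ih, sum_range_dfRatio_div, dfRatio_succ]
    field_simp
    push_cast
    ring

noncomputable def rad15Coeff (n k : ℕ) : ℝ :=
  if k = 0 then ((2 * n)‼ : ℝ) / (2 * n - 1)‼
  else -(((2 * (n - k) * (2 * n - 2)‼ * (2 * k - 3)‼ : ℕ) : ℝ) /
    (((2 * n - 1)‼ * (2 * k)‼ : ℕ) : ℝ))

lemma rad15Coeff_zero (m : ℕ) : rad15Coeff (m + 1) 0 = 2 * (m + 1) / ((2 * m + 1) * dfRatio m) := by
  have := Nat.doubleFactorial_pos (2 * m)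
  have := Nat.doubleFactorial_pos (2 * m - 1)
  rw [rad15Coeff, if_pos rfl, dfRatio, show 2 * (m + 1) - 1 = 2 * m + 1 by omega,
    show 2 * (m + 1) = 2 * m + 2 by ring, Nat.doubleFactorial_add_one (2 * m),
    Nat.doubleFactorial_add_two]
  push_cast
  field_simp

lemma rad15Coeff_succ {m j : ℕ} (hj : j ≤ m) :
    rad15Coeff (m + 1) (j + 1) = -((m - j) * dfRatio j / (j + 1)) / ((2 * m + 1) * dfRatio m) := by
  have := Nat.doubleFactorial_pos (2 * m)
  have := Nat.doubleFactorial_pos (2 * m - 1)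
  have := Nat.doubleFactorial_pos (2 * j)
  have := Nat.doubleFactorial_pos (2 * j - 1)
  rw [rad15Coeff, if_neg j.succ_ne_zero, dfRatio, dfRatio,
    show 2 * (m + 1) - 1 = 2 * m + 1 by omega, show 2 * (m + 1) - 2 = 2 * m by omega,
    show 2 * (j + 1) - 3 = 2 * j - 1 by omega, show 2 * (j + 1) = 2 * j + 2 by ring, Nat.add_sub_add_right, Nat.doubleFactorial_add_one,
    Nat.doubleFactorial_add_two]
  push_cast [Nat.cast_sub hj]
  field_simp

lemma rad15Coeff_recurrence {m k : ℕ} (hk : k < m + 1) :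
    (2 * k - 1) * (k + 1 - (m + 1 : ℕ)) * rad15Coeff (m + 1) k =
      2 * (k + 1) * (k - (m + 1 : ℕ)) * rad15Coeff (m + 1) (k + 1) := by
  have hd := dfRatio_pos m
  rcases k with _ | j
  · rw [rad15Coeff_zero, rad15Coeff_succ (Nat.zero_le m), dfRatio_zero]
    field_simp
    push_cast
    ring
  · have hdj := dfRatio_pos j
    rw [rad15Coeff_succ (by omega), rad15Coeff_succ (by omega), dfRatio_succ]
    field_simp
    push_cast
    ring

lemma sum_range_rad15Coeff (m : ℕ) : ∑ k ∈ range (m + 1), rad15Coeff (m + 1) k = 2 := by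
  have hd := dfRatio_pos m
  rw [sum_range_succ', sum_congr rfl fun j hj => rad15Coeff_succ (mem_range.1 hj).le, ← sum_div,
    sum_neg_distrib, sum_range_sub_mul_dfRatio_div, rad15Coeff_zero]
  field_simp
  ring

lemma rad15_eq_sum {k₁ k₂ ε s : ℝ} (hu : 0 < 1 + k₂ * s ^ 2) (m : ℕ) :
    rad15 k₁ k₂ ε (m + 1) s =
      1 + k₁ * s ^ 2 +
        ε * ∑ k ∈ range (m + 1), rad15Coeff (m + 1) k * radTerm k₂ (1 / 2 - k) s := by
  have hpow (k : ℕ) : (1 + k₂ * s ^ 2) ^ ((1 / 2 : ℝ) - k) =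
      √(1 + k₂ * s ^ 2) * (1 + k₂ * s ^ 2) ^ (-(k : ℤ)) := by
    rw [Real.sqrt_eq_rpow, ← Real.rpow_intCast, ← Real.rpow_add hu]
    push_cast
    ring_nf
  have hterm : ∀ k ∈ Icc 1 m, rad15Coeff (m + 1) k * radTerm k₂ (1 / 2 - k) s =
      -(s * √(1 + k₂ * s ^ 2) *
        (((2 * (m + 1 - k) * (2 * (m + 1) - 2)‼ * (2 * k - 3)‼ : ℕ) : ℝ) /
          (((2 * (m + 1) - 1)‼ * (2 * k)‼ : ℕ) : ℝ) * (1 + k₂ * s ^ 2) ^ (-(k : ℤ)))) := by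
    intro k hk
    rw [rad15Coeff, if_neg (Nat.one_le_iff_ne_zero.1 (mem_Icc.1 hk).1), radTerm, hpow]
    ring
  rw [range_eq_Ico, sum_eq_sum_Ico_succ_bot (Nat.succ_pos m), zero_add, Nat.succ_eq_add_one,
    Ico_add_one_right_eq_Icc, sum_congr rfl hterm, sum_neg_distrib, ← mul_sum, rad15Coeff,
    if_pos rfl, radTerm, hpow, rad15, Nat.add_sub_cancel]
  simp only [CharP.cast_eq_zero, neg_zero, zpow_zero]
  ring

noncomputable def radDeriv (k₁ k₂ ε : ℝ) (n : ℕ) (t : ℝ) : ℝ :=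
  2 * k₁ * t + ε * ∑ k ∈ range n, rad15Coeff n k * radTermDeriv k₂ (1 / 2 - k) t

noncomputable def radDeriv2 (k₁ k₂ ε : ℝ) (n : ℕ) (t : ℝ) : ℝ :=
  2 * k₁ + ε * ∑ k ∈ range n, rad15Coeff n k * radTermDeriv2 k₂ (1 / 2 - k) t

section Radicand

variable {k₁ k₂ ε s : ℝ}

lemma hasDerivAt_rad15 (hu : 0 < 1 + k₂ * s ^ 2) (m : ℕ) :
    HasDerivAt (rad15 k₁ k₂ ε (m + 1)) (radDeriv k₁ k₂ ε (m + 1) s) s := by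
  have hu_near : ∀ᶠ t in 𝓝 s, 0 < 1 + k₂ * t ^ 2 :=
    continuousAt_const.eventually_lt (by fun_prop) hu
  refine HasDerivAt.congr_of_eventuallyEq ?_ (hu_near.mono fun t ht => rad15_eq_sum ht m)
  refine ((((hasDerivAt_pow 2 s).const_mul k₁).const_add 1).fun_add
    ((HasDerivAt.fun_sum fun k _ =>
      (hasDerivAt_radTerm hu _).const_mul _).const_mul ε)).congr_deriv ?_
  simp only [radDeriv]
  ring

lemma hasDerivAt_radDeriv (hu : 0 < 1 + k₂ * s ^ 2) (n : ℕ) :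
    HasDerivAt (radDeriv k₁ k₂ ε n) (radDeriv2 k₁ k₂ ε n s) s := by
  refine (((hasDerivAt_id' s).const_mul (2 * k₁)).fun_add
    ((HasDerivAt.fun_sum fun k _ =>
      (hasDerivAt_radTermDeriv hu _).const_mul _).const_mul ε)).congr_deriv ?_
  simp only [radDeriv2]
  ring

lemma radDeriv_zero (m : ℕ) : radDeriv k₁ k₂ ε (m + 1) 0 = 2 * ε := by
  simp [radDeriv, radTermDeriv, sum_range_rad15Coeff, mul_comm]

lemma rad15_linear_ode (hu : 0 < 1 + k₂ * s ^ 2) {m : ℕ} (hk : k₁ = 2 * (m + 1 : ℕ) * k₂) :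
    (1 + k₂ * s ^ 2) * radDeriv2 k₁ k₂ ε (m + 1) s =
      (k₂ - k₁) * s * radDeriv k₁ k₂ ε (m + 1) s + 2 * k₁ * rad15 k₁ k₂ ε (m + 1) s := by
  set u := 1 + k₂ * s ^ 2
  have hsum : u * ∑ k ∈ range (m + 1), rad15Coeff (m + 1) k * radTermDeriv2 k₂ (1 / 2 - k) s -
      (k₂ - k₁) * s * ∑ k ∈ range (m + 1), rad15Coeff (m + 1) k * radTermDeriv k₂ (1 / 2 - k) s -
      2 * k₁ * ∑ k ∈ range (m + 1), rad15Coeff (m + 1) k * radTerm k₂ (1 / 2 - k) s = 0 := by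
    rw [← mul_zero (2 * k₂ * s), ← sum_range_mul_eq_zero_of_recurrence
      (fun k hk => rad15Coeff_recurrence hk) (fun j => u ^ ((1 / 2 : ℝ) - j)),
      mul_sum, mul_sum, mul_sum, mul_sum, ← sum_sub_distrib, ← sum_sub_distrib]
    refine sum_congr rfl fun k _ => ?_
    have hres := radTerm_ode_residual hu k₁ (1 / 2 - k)
    rw [show (1 / 2 : ℝ) - (k + 1 : ℕ) = 1 / 2 - k - 1 by push_cast; ring, hk]
    rw [hk] at hres
    linear_combination rad15Coeff (m + 1) k * hres
  rw [radDeriv2, radDeriv, rad15_eq_sum hu]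
  linear_combination ε * hsum

end Radicand

theorem stmt15_general (k₁ k₂ ε : ℝ) (n : ℕ) (hn : 1 ≤ n)
    (hk₂ : k₂ = k₁ / (2 * n)) (a b : ℝ)
    (hpos : ∀ s ∈ Set.Ioo a b,
      0 < 1 + k₁ * s ^ 2 ∧ 0 < 1 + k₂ * s ^ 2 ∧ 0 < rad15 k₁ k₂ ε n s) :
    (∀ s ∈ Set.Ioo a b,
      eqE k₁ (k₁ / (2 * n)) 0 (fun t => Real.sqrt (rad15 k₁ k₂ ε n t)) s) ∧
    (fun t => Real.sqrt (rad15 k₁ k₂ ε n t)) 0 = 1 ∧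
    deriv (fun t => Real.sqrt (rad15 k₁ k₂ ε n t)) 0 = ε := by
  obtain ⟨m, rfl⟩ := Nat.exists_eq_add_of_le' hn
  have hk₁ : k₁ = 2 * (m + 1 : ℕ) * k₂ := by
    rw [hk₂]
    field_simp
  have hrad_zero : rad15 k₁ k₂ ε (m + 1) 0 = 1 := by simp [rad15]
  refine ⟨fun s hs => ?_, by simp [hrad_zero], ?_⟩
  · obtain ⟨-, hu, hrad⟩ := hpos s hs
    have hderiv : ∀ᶠ t in 𝓝 s, HasDerivAt (rad15 k₁ k₂ ε (m + 1)) (radDeriv k₁ k₂ ε (m + 1) t) t :=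
      eventually_of_mem (isOpen_Ioo.mem_nhds hs) fun t ht => hasDerivAt_rad15 (hpos t ht).2.1 m
    rw [← hk₂]
    refine eqE_sqrt_of_linear_ode hderiv (hasDerivAt_radDeriv hu _) hrad ?_
    simpa using rad15_linear_ode hu hk₁
  · have hderiv0 := (hasDerivAt_rad15 (k₁ := k₁) (ε := ε) (by simp : 0 < 1 + k₂ * 0 ^ 2) m).sqrt
      (by simp [hrad_zero])
    rw [hderiv0.deriv, hrad_zero, radDeriv_zero]
    simp

theorem stmt15 (k₁ k₂ ε : ℝ) (hk₁ : k₁ ≠ 0) (n : ℕ) (hn : 1 ≤ n)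
    (hk₂ : k₂ = k₁ / (2 * n)) (a b : ℝ) (ha : a < 0) (hb : 0 < b)
    (hpos : ∀ s ∈ Set.Ioo a b,
      0 < 1 + k₁ * s ^ 2 ∧ 0 < 1 + k₂ * s ^ 2 ∧ 0 < rad15 k₁ k₂ ε n s) :
    (∀ s ∈ Set.Ioo a b,
      eqE k₁ (k₁ / (2 * n)) 0 (fun t => Real.sqrt (rad15 k₁ k₂ ε n t)) s) ∧
    (fun t => Real.sqrt (rad15 k₁ k₂ ε n t)) 0 = 1 ∧
    deriv (fun t => Real.sqrt (rad15 k₁ k₂ ε n t)) 0 = ε :=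
  stmt15_general k₁ k₂ ε n hn hk₂ a b hpos
end
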